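/- Let ψ : ℕ → ℝ satisfy Σ_{n≥0} ψ_n = 1 and σ_I²(ψ) = Σ_{n≥0} (Σ_{j=0}^{n−1} ψ_j − 1)² < ∞. For an integer k ≥ 1 define the pure-delay policy ψ′ by ψ′_n = ψ_{n−k} for n ≥ k and ψ′_n = 0 for n < k. Then σ_I²(ψ′) = σ_I²(ψ) + k. Moreover, if Σ_{n≥0} |ψ_n| < ∞, then |Σ_{n≥0} ψ′_n e^{−inλ}| = |Σ_{n≥0} ψ_n e^{−inλ}| for every λ, so the spectral density of the orders—and hence the supplier's mean squared forecast error—is unchanged by the pure delay. Consequently, a pure delay of k ≥ 1 periods strictly increases the total supply-chain cost κ·σ_I + σ_S for any κ > 0. -/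

import Mathlib

open MeasureTheory intervalIntegral

/-- Inventory variance `σ_I²(ψ) = Σ_{n≥0} (Σ_{j<n} ψ_j − 1)²` of a policy. -/
noncomputable def sigmaI2 (ψ : ℕ → ℝ) : ℝ :=
  ∑' n : ℕ, (∑ j ∈ Finset.range n, ψ j - 1) ^ 2

/-- Supplier's MSFE from Kolmogorov's formula applied to the spectral density
`λ ↦ |Σ_n ψ_n e^{−inλ}|²`. -/
noncomputable def sigmaS2spec (ψ : ℕ → ℝ) : ℝ :=
  Real.exp ((1 / (2 * Real.pi)) * ∫ l in (-Real.pi)..Real.pi,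
    Real.log (‖∑' n : ℕ, (ψ n : ℂ) * Complex.exp (-Complex.I * n * l)‖ ^ 2))

/-!
Delaying by `k` periods shifts every partial sum `Σ_{j<n} ψ_j` forward by `k` and prepends
`k` partial sums equal to `0`, each contributing `(0 - 1)² = 1` to the inventory variance.
On the frequency side the delay multiplies the transfer function by the unimodular factor
`e^{-ikλ}`, so the spectral density, and with it Kolmogorov's forecast error, is unchanged.
-/

open Finset Complex

def delay {M : Type*} [Zero M] (k : ℕ) (ψ : ℕ → M) (n : ℕ) : M :=
  if k ≤ n then ψ (n - k) else 0

section Delay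

variable {M : Type*} (k : ℕ)

@[simp]
lemma delay_add [Zero M] (ψ : ℕ → M) (n : ℕ) : delay k ψ (n + k) = ψ n := by
  simp [delay]

lemma delay_of_lt [Zero M] (ψ : ℕ → M) {n : ℕ} (hn : n < k) : delay k ψ n = 0 := by
  simp [delay, Nat.not_le.mpr hn]

lemma sum_range_delay_of_le [AddCommMonoid M] (ψ : ℕ → M) {n : ℕ} (hn : n ≤ k) :
    ∑ j ∈ range n, delay k ψ j = 0 :=
  sum_eq_zero fun _ hj => delay_of_lt k ψ ((mem_range.mp hj).trans_le hn)

lemma sum_range_add_delay [AddCommMonoid M] (ψ : ℕ → M) (n : ℕ) :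
    ∑ j ∈ range (n + k), delay k ψ j = ∑ j ∈ range n, ψ j := by
  rw [add_comm, sum_range_add, sum_range_delay_of_le k ψ le_rfl, zero_add]
  simp [add_comm k]

lemma tsum_eq_tsum_nat_add_of_lt [AddCommMonoid M] [TopologicalSpace M] {f : ℕ → M}
    (hf : ∀ n < k, f n = 0) : ∑' n, f n = ∑' n, f (n + k) := by
  refine ((add_left_injective k).tsum_eq fun n hn => ?_).symm
  exact ⟨n - k, Nat.sub_add_cancel (not_lt.mp fun h => hn (hf n h))⟩

end Delay

lemma sigmaI2_nonneg (ψ : ℕ → ℝ) : 0 ≤ sigmaI2 ψ :=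
  tsum_nonneg fun _ => sq_nonneg _

lemma sigmaI2_delay (ψ : ℕ → ℝ) (k : ℕ)
    (hI : Summable fun n : ℕ => (∑ j ∈ range n, ψ j - 1) ^ 2) :
    sigmaI2 (delay k ψ) = sigmaI2 ψ + k := by
  set f : ℕ → ℝ := fun n => (∑ j ∈ range n, delay k ψ j - 1) ^ 2
  have hshift : (fun n => f (n + k)) = fun n => (∑ j ∈ range n, ψ j - 1) ^ 2 := by
    funext n
    simp only [f, sum_range_add_delay]
  have hhead : ∑ i ∈ range k, f i = k := by
    rw [sum_congr rfl fun i hi => show f i = 1 by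
      simp [f, sum_range_delay_of_le k ψ (mem_range.mp hi).le]]
    simp
  have hf : Summable f := (summable_nat_add_iff k).mp (hshift ▸ hI)
  rw [sigmaI2, ← hf.sum_add_tsum_nat_add k, hhead, hshift, add_comm, sigmaI2]

noncomputable def freqResponse (ψ : ℕ → ℝ) (l : ℝ) : ℂ :=
  ∑' n : ℕ, (ψ n : ℂ) * exp (-I * n * l)

lemma freqResponse_delay (ψ : ℕ → ℝ) (k : ℕ) (l : ℝ) :
    freqResponse (delay k ψ) l = exp (-I * k * l) * freqResponse ψ l := by
  rw [freqResponse, freqResponse, ← tsum_mul_left,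
    tsum_eq_tsum_nat_add_of_lt k fun n hn => by simp [delay_of_lt k ψ hn]]
  congr 1 with n
  rw [delay_add, mul_left_comm, ← Complex.exp_add]
  push_cast
  ring_nf

lemma norm_freqResponse_delay (ψ : ℕ → ℝ) (k : ℕ) (l : ℝ) :
    ‖freqResponse (delay k ψ) l‖ = ‖freqResponse ψ l‖ := by
  simp [freqResponse_delay, Complex.norm_exp]

lemma sigmaS2spec_congr {ψ φ : ℕ → ℝ} (h : ∀ l, ‖freqResponse ψ l‖ = ‖freqResponse φ l‖) :
    sigmaS2spec ψ = sigmaS2spec φ := by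
  unfold sigmaS2spec
  congr 3 with l
  exact congrArg (fun r => Real.log (r ^ 2)) (h l)

theorem stmt_8_general (ψ : ℕ → ℝ)
    (hI : Summable (fun n : ℕ => (∑ j ∈ Finset.range n, ψ j - 1) ^ 2))
    (k : ℕ) (hk : 1 ≤ k)
    (ψ' : ℕ → ℝ) (hψ' : ψ' = fun n => if k ≤ n then ψ (n - k) else 0) :
    sigmaI2 ψ' = sigmaI2 ψ + k ∧
    (Summable (fun n : ℕ => |ψ n|) →
      (∀ l : ℝ,
        ‖∑' n : ℕ, (ψ' n : ℂ) * Complex.exp (-Complex.I * n * l)‖ =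
          ‖∑' n : ℕ, (ψ n : ℂ) * Complex.exp (-Complex.I * n * l)‖) ∧
      sigmaS2spec ψ' = sigmaS2spec ψ ∧
      ∀ κ : ℝ, 0 < κ →
        κ * Real.sqrt (sigmaI2 ψ') + Real.sqrt (sigmaS2spec ψ') >
          κ * Real.sqrt (sigmaI2 ψ) + Real.sqrt (sigmaS2spec ψ)) := by
  obtain rfl : ψ' = delay k ψ := hψ'
  have hI' := sigmaI2_delay ψ k hI
  have hS := sigmaS2spec_congr (norm_freqResponse_delay ψ k)
  refine ⟨hI', fun _ => ⟨norm_freqResponse_delay ψ k, hS, fun κ hκ => ?_⟩⟩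
  have hk' : (0 : ℝ) < k := by exact_mod_cast hk
  have hsqrt : √(sigmaI2 ψ) < √(sigmaI2 (delay k ψ)) :=
    Real.sqrt_lt_sqrt (sigmaI2_nonneg ψ) (by linarith)
  rw [hS]
  gcongr

/-- A pure delay of `k ≥ 1` periods adds exactly `k` to the inventory variance,
leaves the spectral density of orders (hence the supplier's forecast error)
unchanged, and therefore strictly increases the total cost `κ·σ_I + σ_S` for
every `κ > 0`. -/
theorem stmt_8 (ψ : ℕ → ℝ)
    (hsum : Filter.Tendsto (fun N => ∑ n ∈ Finset.range N, ψ n) Filter.atTop (nhds 1))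
    (hI : Summable (fun n : ℕ => (∑ j ∈ Finset.range n, ψ j - 1) ^ 2))
    (k : ℕ) (hk : 1 ≤ k)
    (ψ' : ℕ → ℝ) (hψ' : ψ' = fun n => if k ≤ n then ψ (n - k) else 0) :
    sigmaI2 ψ' = sigmaI2 ψ + k ∧
    (Summable (fun n : ℕ => |ψ n|) →
      (∀ l : ℝ,
        ‖∑' n : ℕ, (ψ' n : ℂ) * Complex.exp (-Complex.I * n * l)‖ =
          ‖∑' n : ℕ, (ψ n : ℂ) * Complex.exp (-Complex.I * n * l)‖) ∧
      sigmaS2spec ψ' = sigmaS2spec ψ ∧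
      ∀ κ : ℝ, 0 < κ →
        κ * Real.sqrt (sigmaI2 ψ') + Real.sqrt (sigmaS2spec ψ') >
          κ * Real.sqrt (sigmaI2 ψ) + Real.sqrt (sigmaS2spec ψ)) :=
  stmt_8_general ψ hI k hk ψ' hψ'
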